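/- arXiv:1507.01182 — 3 statements merged into one kernel-verified Lean document; each statement's English description precedes it below -/
import Mathlib

section
/- Let Σ be a k×k real positive definite matrix, y ∈ ℝ^k and t ∈ ℝ^k. Then ∫_{∏_{i=1}^k (-∞, y_i]} exp(tᵀx) φ_Σ(x) dx = exp((1/2) tᵀΣt) · Φ_Σ(y − Σt). Equivalently, the moment generating function of the multivariate normal N(0,Σ) right-truncated to the region ∏(−∞, y_i] is m(t) = α^{−1} exp((1/2) tᵀΣt) Φ_Σ(y − Σt) with normalizing constant α = Φ_Σ(y), provided α > 0. -/
open Matrix MeasureTheory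

/-- Density of the multivariate normal distribution `N(μ, S)`. -/
noncomputable def mvnPdf {ι : Type} [Fintype ι] [DecidableEq ι]
    (μ : ι → ℝ) (S : Matrix ι ι ℝ) (x : ι → ℝ) : ℝ :=
  (2 * Real.pi) ^ (-(Fintype.card ι : ℝ) / 2) * S.det ^ (-(1 : ℝ) / 2) *
    Real.exp (-(1 / 2) * ((x - μ) ⬝ᵥ (S⁻¹ *ᵥ (x - μ))))

/-- CDF of the multivariate normal distribution: integral of the density over
`∏ᵢ (-∞, yᵢ]`. -/
noncomputable def mvnCdf {ι : Type} [Fintype ι] [DecidableEq ι]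
    (μ : ι → ℝ) (S : Matrix ι ι ℝ) (y : ι → ℝ) : ℝ :=
  ∫ x in Set.Iic y, mvnPdf μ S x

lemma dot_symm_aux {k : ℕ} {M : Matrix (Fin k) (Fin k) ℝ} (hM : Mᵀ = M) (a b : Fin k → ℝ) :
    a ⬝ᵥ (M *ᵥ b) = b ⬝ᵥ (M *ᵥ a) := by
  rw [Matrix.dotProduct_mulVec, ← Matrix.mulVec_transpose, hM, dotProduct_comm]

/-- The moment generating function identity for the right-truncated multivariate normal
distribution (Tallis 1961):
`∫_{∏ (-∞, yᵢ]} exp(tᵀx) φ_Σ(x) dx = exp(½ tᵀ Σ t) Φ_Σ(y - Σ t)`. -/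
theorem truncated_mvn_mgf {k : ℕ} (S : Matrix (Fin k) (Fin k) ℝ) (hS : S.PosDef)
    (y t : Fin k → ℝ) :
    (∫ x in Set.Iic y, Real.exp (t ⬝ᵥ x) * mvnPdf 0 S x)
      = Real.exp ((1 / 2) * (t ⬝ᵥ (S *ᵥ t))) * mvnCdf 0 S (y - S *ᵥ t) := by
  have hdet : IsUnit S.det := isUnit_iff_ne_zero.mpr hS.det_pos.ne'
  have hSsym : Sᵀ = S := hS.1
  have hinv_sym : (S⁻¹)ᵀ = S⁻¹ := by
    rw [Matrix.transpose_nonsing_inv, hSsym]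
  set c := S *ᵥ t with hc
  have hSinvS : S⁻¹ *ᵥ c = t := by
    rw [hc, Matrix.mulVec_mulVec, Matrix.nonsing_inv_mul S hdet, Matrix.one_mulVec]
  have key : ∀ x : Fin k → ℝ, Real.exp (t ⬝ᵥ x) * mvnPdf 0 S x
      = Real.exp ((1 / 2) * (t ⬝ᵥ c)) * mvnPdf 0 S (x - c) := by
    intro x
    have hxc : x ⬝ᵥ (S⁻¹ *ᵥ c) = t ⬝ᵥ x := by
      rw [hSinvS, dotProduct_comm]
    have hcx : c ⬝ᵥ (S⁻¹ *ᵥ x) = t ⬝ᵥ x := by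
      rw [dot_symm_aux hinv_sym, hxc]
    have hcc : c ⬝ᵥ (S⁻¹ *ᵥ c) = t ⬝ᵥ c := by
      rw [hSinvS, dotProduct_comm]
    have expand : (x - c) ⬝ᵥ (S⁻¹ *ᵥ (x - c))
        = x ⬝ᵥ (S⁻¹ *ᵥ x) - 2 * (t ⬝ᵥ x) + t ⬝ᵥ c := by
      rw [Matrix.mulVec_sub, sub_dotProduct, dotProduct_sub,
        dotProduct_sub, hxc, hcx, hcc]
      ring
    simp only [mvnPdf, sub_zero, expand]
    rw [mul_left_comm, mul_left_comm (Real.exp ((1 / 2) * (t ⬝ᵥ c)))]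
    congr 1
    rw [← Real.exp_add, ← Real.exp_add]
    congr 1
    ring
  simp_rw [key]
  rw [integral_const_mul]
  congr 1
  rw [mvnCdf, ← integral_indicator measurableSet_Iic, ← integral_indicator measurableSet_Iic,
    ← integral_sub_right_eq_self (fun x => Set.indicator (Set.Iic (y - c)) (mvnPdf 0 S) x) c]
  congr 1
  funext x
  by_cases h : x ≤ y
  · rw [Set.indicator_of_mem (Set.mem_Iic.mpr h),
      Set.indicator_of_mem (Set.mem_Iic.mpr (sub_le_sub_right h c))]
  · rw [Set.indicator_of_notMem (fun hmem => h (Set.mem_Iic.mp hmem)),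
      Set.indicator_of_notMem (fun hmem => h (by
        have := Set.mem_Iic.mp hmem
        simpa using sub_le_sub_right this (-c)))]
end

section
/- Let Σ be a k×k real positive definite matrix. Then the CDF Φ_Σ : ℝ^k → ℝ is differentiable, and for every y ∈ ℝ^k the first truncated moment satisfies ∫_{∏_{i=1}^k (−∞, y_i]} x φ_Σ(x) dx = −Σ · ∇Φ_Σ(y), where ∇Φ_Σ(y) ∈ ℝ^k is the gradient of Φ_Σ at y. Equivalently, if T is distributed as N(0,Σ) truncated to ∏(−∞,y_i] with α = Φ_Σ(y) > 0, then E(T) = −α^{−1} Σ ∇Φ_Σ(y). -/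
open Matrix MeasureTheory

/-!
Write `Φ_Σ(y) = ∫_{u ≤ 0} φ_Σ(y + u) du`. The density and its derivative
`Dφ_Σ(x) = -φ_Σ(x) ⟪Σ⁻¹x, ·⟫` are bounded by `C (1 + ‖x‖) exp(-a‖x‖²)`, where `a > 0` comes from
the minimum of `xᵀΣ⁻¹x` on the compact unit sphere; since `‖u‖² ≤ 2‖y + u‖² + 2‖y‖²`, this bound
survives translation by a bounded `y`, so one may differentiate under the integral sign:
`DΦ_Σ(y) = -∫_{x ≤ y} φ_Σ(x) ⟪Σ⁻¹x, ·⟫ dx`. Evaluating at the rows of `Σ` turns `Σ⁻¹x` into `x`.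
-/

open Real Set Metric

theorem exp_neg_mul_sq_norm_add_le {E : Type*} [SeminormedAddCommGroup E] {a : ℝ} (ha : 0 ≤ a)
    (y u : E) :
    exp (-a * ‖y + u‖ ^ 2) ≤ exp (a * ‖y‖ ^ 2) * exp (-(a / 2) * ‖u‖ ^ 2) := by
  rw [← exp_add, exp_le_exp]
  have hu : ‖u‖ ≤ ‖y + u‖ + ‖y‖ := by
    simpa using norm_sub_le (y + u) y
  have hsq : ‖u‖ ^ 2 ≤ 2 * ‖y + u‖ ^ 2 + 2 * ‖y‖ ^ 2 := by
    nlinarith [sq_nonneg (‖y + u‖ - ‖y‖), norm_nonneg u]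
  nlinarith [mul_le_mul_of_nonneg_left hsq ha]

theorem isCoercive_of_pos {E : Type*} [NormedAddCommGroup E] [NormedSpace ℝ E]
    [FiniteDimensional ℝ E] (B : E →L[ℝ] E →L[ℝ] ℝ) (hB : ∀ x ≠ 0, 0 < B x x) :
    IsCoercive B := by
  cases subsingleton_or_nontrivial E
  · exact ⟨1, one_pos, fun u => by simp [Subsingleton.elim u 0]⟩
  obtain ⟨v, hv, hmin⟩ := (isCompact_sphere (0 : E) 1).exists_isMinOn (f := fun x => B x x)
    (NormedSpace.sphere_nonempty.2 zero_le_one) (by fun_prop)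
  refine ⟨B v v, hB v (ne_zero_of_mem_unit_sphere ⟨v, hv⟩), fun u => ?_⟩
  rcases eq_or_ne u 0 with rfl | hu
  · simp
  have hu' : ‖u‖⁻¹ • u ∈ sphere (0 : E) 1 := by
    simp [norm_smul, hu]
  have h : B v v ≤ B (‖u‖⁻¹ • u) (‖u‖⁻¹ • u) := hmin hu'
  simp only [map_smul, _root_.smul_apply, smul_eq_mul] at h
  have hpos : 0 < ‖u‖ := norm_pos_iff.2 hu
  calc B v v * ‖u‖ * ‖u‖ ≤ ‖u‖⁻¹ * (‖u‖⁻¹ * B u u) * ‖u‖ * ‖u‖ := by gcongr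
    _ = B u u := by field_simp

theorem mulVec_apply_single_one {m ι R F : Type*} [Fintype ι] [DecidableEq ι] [CommSemiring R]
    [FunLike F (ι → R) R] [LinearMapClass F R (ι → R) R] (A : Matrix m ι R) (L : F) (j : m) :
    (A *ᵥ fun i => L (Pi.single i 1)) j = L (A j) := by
  conv_rhs => rw [← Finset.univ_sum_single (A j)]
  simp only [mulVec, dotProduct, map_sum]
  refine Finset.sum_congr rfl fun i _ => ?_
  rw [← smul_eq_mul, ← map_smul, ← Pi.single_smul', smul_eq_mul, mul_one]

section GaussianEnvelope

variable {E : Type*} [NormedAddCommGroup E] [NormedSpace ℝ E] [FiniteDimensional ℝ E]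
  [MeasurableSpace E] [BorelSpace E] (μ : Measure E) [μ.IsAddHaarMeasure]

theorem integrable_pow_norm_mul_exp_neg_mul_sq_norm {b : ℝ} (hb : 0 < b) (n : ℕ) :
    Integrable (fun x : E => ‖x‖ ^ n * exp (-b * ‖x‖ ^ 2)) μ := by
  cases subsingleton_or_nontrivial E
  · exact .of_finite
  rw [integrable_fun_norm_addHaar μ (f := fun t => t ^ n * exp (-b * t ^ 2))]
  refine (integrableOn_rpow_mul_exp_neg_mul_sq hb (s := (Module.finrank ℝ E - 1 + n : ℕ))
    (neg_one_lt_zero.trans_le (Nat.cast_nonneg _))).congr_fun (fun t _ => ?_) measurableSet_Ioi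
  simp only [rpow_natCast, smul_eq_mul, pow_add]
  ring

theorem integrable_of_norm_le_one_add_norm_mul_exp {F : Type*} [NormedAddCommGroup F]
    {g : E → F} {a C : ℝ} (ha : 0 < a) (hg : AEStronglyMeasurable g μ)
    (hle : ∀ x, ‖g x‖ ≤ C * (1 + ‖x‖) * exp (-a * ‖x‖ ^ 2)) : Integrable g μ := by
  have h := ((integrable_pow_norm_mul_exp_neg_mul_sq_norm μ ha 0).add
    (integrable_pow_norm_mul_exp_neg_mul_sq_norm μ ha 1)).const_mul C
  refine h.mono' hg (.of_forall fun x => (hle x).trans_eq ?_)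
  simp only [Pi.add_apply]
  ring

variable {F : Type*} [NormedAddCommGroup F] [NormedSpace ℝ F]

theorem hasFDerivAt_setIntegral_comp_add {f : E → F} {a C : ℝ} (ha : 0 < a)
    (hf : ContDiff ℝ 1 f) (hfi : Integrable f μ)
    (hf' : ∀ x, ‖fderiv ℝ f x‖ ≤ C * (1 + ‖x‖) * exp (-a * ‖x‖ ^ 2)) (s : Set E) (y₀ : E) :
    HasFDerivAt (fun y => ∫ u in s, f (y + u) ∂μ) (∫ u in s, fderiv ℝ f (y₀ + u) ∂μ) y₀ := by
  have hC : 0 ≤ C := by simpa using (norm_nonneg _).trans (hf' 0)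
  set R := ‖y₀‖ + 1
  have hR : ∀ y ∈ ball y₀ 1, ‖y‖ ≤ R := fun y hy => by
    linarith [norm_sub_norm_le y y₀, dist_eq_norm y y₀, mem_ball.1 hy]
  have hf'_cont : Continuous (fderiv ℝ f) := hf.continuous_fderiv one_ne_zero
  refine hasFDerivAt_integral_of_dominated_of_fderiv_le (ball_mem_nhds y₀ one_pos)
    (F := fun y u => f (y + u)) (F' := fun y u => fderiv ℝ f (y + u))
    (bound := fun u => C * (1 + R) * exp (a * R ^ 2) * ((1 + ‖u‖) * exp (-(a / 2) * ‖u‖ ^ 2)))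
    (.of_forall fun y => (hf.continuous.comp (continuous_const_add y)).aestronglyMeasurable)
    ((hfi.comp_add_left y₀).restrict)
    (hf'_cont.comp (continuous_const_add y₀)).aestronglyMeasurable
    (.of_forall fun u y hy => ?_) ?_
    (.of_forall fun u y _ => (hasFDerivAt_comp_add_right u).2 ?_)
  · calc ‖fderiv ℝ f (y + u)‖ ≤ C * (1 + ‖y + u‖) * exp (-a * ‖y + u‖ ^ 2) := hf' _
      _ ≤ C * ((1 + R) * (1 + ‖u‖)) * (exp (a * R ^ 2) * exp (-(a / 2) * ‖u‖ ^ 2)) := by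
        gcongr
        · nlinarith [norm_add_le y u, hR y hy, norm_nonneg u, norm_nonneg y]
        · exact (exp_neg_mul_sq_norm_add_le ha.le y u).trans (by gcongr; exact hR y hy)
      _ = _ := by ring
  · refine (integrable_of_norm_le_one_add_norm_mul_exp μ (C := C * (1 + R) * exp (a * R ^ 2))
      (half_pos ha) (by fun_prop) fun u => le_of_eq ?_).restrict
    rw [Real.norm_eq_abs, abs_of_nonneg (by positivity)]
    ring
  · exact (hf.differentiable one_ne_zero _).hasFDerivAt

end GaussianEnvelope

section Orthant

variable {ι : Type*} [Fintype ι] {F : Type*} [NormedAddCommGroup F] [NormedSpace ℝ F]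

theorem setIntegral_Iic_eq_comp_add (g : (ι → ℝ) → F) (y : ι → ℝ) :
    ∫ x in Iic y, g x = ∫ u in Iic 0, g (y + u) := by
  have h := (measurePreserving_add_left volume y).setIntegral_preimage_emb
    (measurableEmbedding_addLeft y) g (Iic y)
  rwa [show (y + ·) ⁻¹' Iic y = Iic 0 by ext; simp, eq_comm] at h

theorem hasFDerivAt_setIntegral_Iic {f : (ι → ℝ) → F} {a C : ℝ} (ha : 0 < a)
    (hf : ContDiff ℝ 1 f) (hfi : Integrable f)
    (hf' : ∀ x, ‖fderiv ℝ f x‖ ≤ C * (1 + ‖x‖) * exp (-a * ‖x‖ ^ 2)) (y₀ : ι → ℝ) :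
    HasFDerivAt (fun y => ∫ x in Iic y, f x) (∫ x in Iic y₀, fderiv ℝ f x) y₀ := by
  rw [setIntegral_Iic_eq_comp_add (fderiv ℝ f)]
  simp_rw [setIntegral_Iic_eq_comp_add f]
  exact hasFDerivAt_setIntegral_comp_add volume ha hf hfi hf' _ y₀

end Orthant

section MultivariateNormal

variable {ι : Type} [Fintype ι] [DecidableEq ι] {S : Matrix ι ι ℝ}

noncomputable def precisionForm (S : Matrix ι ι ℝ) : (ι → ℝ) →L[ℝ] (ι → ℝ) →L[ℝ] ℝ :=
  (toLinearMap₂' ℝ S⁻¹).toContinuousBilinearMap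

theorem precisionForm_apply (v w : ι → ℝ) : precisionForm S v w = v ⬝ᵥ S⁻¹ *ᵥ w :=
  toLinearMap₂'_apply' _ _ _

theorem precisionForm_comm (hS : S.IsHermitian) (v w : ι → ℝ) :
    precisionForm S v w = precisionForm S w v := by
  have h : S⁻¹ᵀ = S⁻¹ := by simpa [conjTranspose_eq_transpose_of_trivial] using hS.inv.eq
  rw [precisionForm_apply, precisionForm_apply, dotProduct_comm, dotProduct_mulVec,
    ← mulVec_transpose, h]

theorem precisionForm_row_apply (hS : IsUnit S.det) (j : ι) (x : ι → ℝ) :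
    precisionForm S (S j) x = x j := by
  rw [precisionForm_apply]
  change (S *ᵥ (S⁻¹ *ᵥ x)) j = x j
  rw [mulVec_mulVec, mul_nonsing_inv _ hS, one_mulVec]

theorem mvnPdf_zero_eq (x : ι → ℝ) :
    mvnPdf 0 S x = mvnPdf 0 S 0 * exp (-(1 / 2) * precisionForm S x x) := by
  simp [mvnPdf, precisionForm_apply]

theorem contDiff_mvnPdf_zero {n : WithTop ℕ∞} : ContDiff ℝ n (mvnPdf 0 S) := by
  rw [funext mvnPdf_zero_eq]
  fun_prop

theorem hasFDerivAt_mvnPdf_zero (hS : S.IsHermitian) (x : ι → ℝ) :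
    HasFDerivAt (mvnPdf 0 S) (-mvnPdf 0 S x • (precisionForm S).flip x) x := by
  have h := (((precisionForm S).hasFDerivAt_of_bilinear (hasFDerivAt_id x)
    (hasFDerivAt_id x)).const_mul (-(1 / 2) : ℝ)).exp.const_mul (mvnPdf 0 S 0)
  refine (h.congr_of_eventuallyEq (.of_forall mvnPdf_zero_eq)).congr_fderiv ?_
  ext v
  simp only [one_div, id_eq, neg_mul, ContinuousLinearMap.precompR_apply,
    ContinuousLinearMap.compL_apply, ContinuousLinearMap.comp_id, smul_add, neg_smul, smul_neg,
    _root_.add_apply, _root_.neg_apply, _root_.smul_apply, smul_eq_mul,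
    ContinuousLinearMap.precompL_apply, ContinuousLinearMap.id_apply, precisionForm_comm hS v x,
    mvnPdf_zero_eq x, ContinuousLinearMap.flip_apply]
  ring

theorem mvnPdf_pos (μ : ι → ℝ) (hS : S.PosDef) (x : ι → ℝ) : 0 < mvnPdf μ S x := by
  have := hS.det_pos
  unfold mvnPdf
  positivity

theorem exists_mvnPdf_zero_le (hS : S.PosDef) :
    ∃ a > 0, ∀ x, mvnPdf 0 S x ≤ mvnPdf 0 S 0 * exp (-a * ‖x‖ ^ 2) := by
  obtain ⟨m, hm, hcoer⟩ := isCoercive_of_pos (precisionForm S) fun x hx => by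
    simpa [precisionForm_apply] using hS.inv.dotProduct_mulVec_pos hx
  refine ⟨m / 2, by positivity, fun x => ?_⟩
  rw [mvnPdf_zero_eq]
  refine mul_le_mul_of_nonneg_left (exp_le_exp.2 ?_) (mvnPdf_pos 0 hS 0).le
  nlinarith [hcoer x]

theorem exists_mvnPdf_zero_envelope (hS : S.PosDef) : ∃ a > 0, ∃ C, ∀ x,
    ‖mvnPdf 0 S x‖ ≤ C * (1 + ‖x‖) * exp (-a * ‖x‖ ^ 2) ∧
    ‖fderiv ℝ (mvnPdf 0 S) x‖ ≤ C * (1 + ‖x‖) * exp (-a * ‖x‖ ^ 2) := by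
  obtain ⟨a, ha, hle⟩ := exists_mvnPdf_zero_le hS
  set L := (precisionForm S).flip
  refine ⟨a, ha, mvnPdf 0 S 0 * (1 + ‖L‖), fun x => ?_⟩
  have h0 := (mvnPdf_pos 0 hS 0).le
  refine ⟨?_, ?_⟩
  · rw [norm_of_nonneg (mvnPdf_pos 0 hS x).le]
    calc mvnPdf 0 S x ≤ mvnPdf 0 S 0 * exp (-a * ‖x‖ ^ 2) * 1 := by simpa using hle x
      _ ≤ mvnPdf 0 S 0 * exp (-a * ‖x‖ ^ 2) * ((1 + ‖L‖) * (1 + ‖x‖)) := by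
          gcongr
          nlinarith [norm_nonneg L, norm_nonneg x]
      _ = _ := by ring
  · rw [(hasFDerivAt_mvnPdf_zero hS.isHermitian x).fderiv, norm_smul, norm_neg,
      norm_of_nonneg (mvnPdf_pos 0 hS x).le]
    calc mvnPdf 0 S x * ‖L x‖ ≤ mvnPdf 0 S 0 * exp (-a * ‖x‖ ^ 2) * (‖L‖ * ‖x‖) :=
          mul_le_mul (hle x) (L.le_opNorm x) (norm_nonneg _) (by positivity)
      _ ≤ mvnPdf 0 S 0 * exp (-a * ‖x‖ ^ 2) * ((1 + ‖L‖) * (1 + ‖x‖)) := by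
          gcongr <;> linarith
      _ = _ := by ring

end MultivariateNormal

/-- The CDF `Φ_Σ` is differentiable and the first truncated moment of `N(0,Σ)` over
`∏ (-∞, yᵢ]` equals `-Σ ∇Φ_Σ(y)`. -/
theorem truncated_mvn_first_moment {k : ℕ} (S : Matrix (Fin k) (Fin k) ℝ)
    (hS : S.PosDef) :
    Differentiable ℝ (mvnCdf (0 : Fin k → ℝ) S) ∧
    ∀ y : Fin k → ℝ,
      (fun i => ∫ x in Set.Iic y, x i * mvnPdf 0 S x)
        = -(S *ᵥ fun i => fderiv ℝ (mvnCdf (0 : Fin k → ℝ) S) y (Pi.single i 1)) := by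
  obtain ⟨a, ha, C, hbound⟩ := exists_mvnPdf_zero_envelope hS
  have hpdf_int : Integrable (mvnPdf 0 S) :=
    integrable_of_norm_le_one_add_norm_mul_exp volume ha
      (contDiff_mvnPdf_zero (n := 0)).continuous.aestronglyMeasurable fun x => (hbound x).1
  have hfderiv_int : Integrable (fderiv ℝ (mvnPdf 0 S)) :=
    integrable_of_norm_le_one_add_norm_mul_exp volume ha
      ((contDiff_mvnPdf_zero (n := 1)).continuous_fderiv one_ne_zero).aestronglyMeasurable
      fun x => (hbound x).2
  have hderiv : ∀ y, HasFDerivAt (mvnCdf 0 S) (∫ x in Iic y, fderiv ℝ (mvnPdf 0 S) x) y :=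
    hasFDerivAt_setIntegral_Iic ha contDiff_mvnPdf_zero hpdf_int fun x => (hbound x).2
  refine ⟨fun y => (hderiv y).differentiableAt, fun y => funext fun j => ?_⟩
  rw [Pi.neg_apply, mulVec_apply_single_one, (hderiv y).fderiv,
    ContinuousLinearMap.integral_apply hfderiv_int.restrict, ← integral_neg]
  refine integral_congr_ae (.of_forall fun x => ?_)
  simp [(hasFDerivAt_mvnPdf_zero hS.isHermitian x).fderiv,
    precisionForm_row_apply (isUnit_iff_ne_zero.2 hS.det_pos.ne'), mul_comm]
end

section
/- Let Σ ∈ ℝ^{k×k} be positive definite, μ ∈ ℝ^k, and fix a coordinate j ∈ {1,…,k} with k ≥ 2. Then the partial derivative of the multivariate normal CDF Φ_{μ,Σ} with respect to the j-th coordinate at y ∈ ℝ^k equals the product of the univariate normal N(μ_j, Σ_{jj}) density evaluated at y_j and the CDF of the conditional normal distribution with mean μ_{−j} + Σ_{−j,j} Σ_{jj}^{−1}(y_j − μ_j) and covariance Σ_{−j,−j} − Σ_{−j,j} Σ_{jj}^{−1} Σ_{j,−j}, evaluated at y_{−j}. Here the subscript −j denotes deletion of the j-th coordinate (row/column). -/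
open Matrix MeasureTheory

open Real Set Filter Topology ProbabilityTheory

/-!
Split `x = (x_j, x_{-j})`. Completing the square in `x_j` (the Schur complement `Δ` of `Σ_jj`)
gives `(x - μ)ᵀ Σ⁻¹ (x - μ) = (x_j - μ_j)² / Σ_jj + wᵀ Δ⁻¹ w`, where `w` is `x_{-j}` minus the
conditional mean at `x_j`, and `det Σ = Σ_jj det Δ`. Hence the density of `N(μ, Σ)` factors as
the `N(μ_j, Σ_jj)` density of `x_j` times the conditional normal density of `x_{-j}`, and by
Fubini `t ↦ Φ_{μ,Σ}(y[j := t])` is the integral over `(-∞, t]` of the univariate density times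
the conditional CDF. The conditional CDF is continuous and bounded in `x_j`, being a fixed
integrable function integrated over a translated orthant, so the fundamental theorem of calculus
gives the derivative.
-/

lemma exists_pos_mul_sum_sq_le_dotProduct_mulVec {ι : Type*} [Fintype ι] {M : Matrix ι ι ℝ}
    (hM : M.PosDef) : ∃ c > 0, ∀ v : ι → ℝ, c * ∑ i, v i ^ 2 ≤ v ⬝ᵥ M *ᵥ v := by
  rcases isEmpty_or_nonempty ι with hι | hι
  · exact ⟨1, one_pos, fun v => by simp⟩
  let q : EuclideanSpace ℝ ι → ℝ := fun w => w.ofLp ⬝ᵥ M *ᵥ w.ofLp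
  have hq : Continuous q := by fun_prop
  obtain ⟨w₀, hw₀, hmin⟩ := (isCompact_sphere (0 : EuclideanSpace ℝ ι) 1).exists_isMinOn
    (NormedSpace.sphere_nonempty.2 zero_le_one) hq.continuousOn
  have hw₀ : w₀.ofLp ≠ 0 := by
    rw [ne_eq, WithLp.ofLp_eq_zero]
    exact ne_zero_of_mem_unit_sphere ⟨w₀, hw₀⟩
  refine ⟨q w₀, by simpa using hM.dotProduct_mulVec_pos hw₀, fun v => ?_⟩
  rcases eq_or_ne v 0 with rfl | hv
  · simp
  set w := WithLp.toLp 2 v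
  have hw : ‖w‖ ≠ 0 := by simpa [w] using hv
  have hsq : ‖w‖ ^ 2 = ∑ i, v i ^ 2 := EuclideanSpace.real_norm_sq_eq w
  have hle : q w₀ ≤ q (‖w‖⁻¹ • w) := hmin (by simp [norm_smul, hw])
  have hscale : q (‖w‖⁻¹ • w) = (‖w‖ ^ 2)⁻¹ * (v ⬝ᵥ M *ᵥ v) := by
    simp only [q, w, WithLp.ofLp_smul, mulVec_smul, dotProduct_smul, smul_dotProduct, smul_eq_mul]
    ring
  rw [hscale, le_inv_mul_iff₀ (by positivity)] at hle
  rwa [← hsq, mul_comm]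

lemma card_eq_card_ne_add_one {ι : Type*} [Fintype ι] [DecidableEq ι] (j : ι) :
    Fintype.card ι = Fintype.card {i // i ≠ j} + 1 := by
  simpa [add_comm] using (Fintype.card_congr (Equiv.sumCompl (· = j))).symm

section Schur
variable {ι : Type*} [Fintype ι] [DecidableEq ι] (S : Matrix ι ι ℝ) (j : ι)

noncomputable def condCov : Matrix {i // i ≠ j} {i // i ≠ j} ℝ :=
  of fun a b => S a b - S a j * (S j j)⁻¹ * S j b

noncomputable def condMean (μ : ι → ℝ) (t : ℝ) : {i // i ≠ j} → ℝ :=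
  fun i => μ i + S i j * (S j j)⁻¹ * (t - μ j)

variable {S j}

lemma mulVec_apply_eq_add_sum_ne (u : ι → ℝ) (a : ι) :
    (S *ᵥ u) a = S a j * u j + ∑ b : {i // i ≠ j}, S a b * u b := by
  simp only [mulVec, dotProduct, Fintype.sum_eq_add_sum_subtype_ne _ j]

lemma condCov_mulVec (hj : S j j ≠ 0) (u : ι → ℝ) :
    condCov S j *ᵥ (fun i => u i) =
      fun a : {i // i ≠ j} => (S *ᵥ u) a - S a j * (S j j)⁻¹ * (S *ᵥ u) j := by
  ext a
  simp only [mulVec, dotProduct, condCov, of_apply, Fintype.sum_eq_add_sum_subtype_ne _ j, sub_mul,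
    Finset.sum_sub_distrib, mul_add, Finset.mul_sum]
  simp only [mul_assoc, inv_mul_cancel_left₀ hj]
  ring

lemma dotProduct_mulVec_eq_add_condCov (hS : S.IsSymm) (hj : S j j ≠ 0) (u : ι → ℝ) :
    u ⬝ᵥ S *ᵥ u =
      (S *ᵥ u) j ^ 2 / S j j + (fun i : {i // i ≠ j} => u i) ⬝ᵥ condCov S j *ᵥ (fun i => u i) := by
  have hvj : (S *ᵥ u) j = S j j * u j + ∑ b : {i // i ≠ j}, u b * S b j := by
    simp only [mulVec, dotProduct, Fintype.sum_eq_add_sum_subtype_ne _ j, hS.apply, mul_comm]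
  rw [condCov_mulVec hj]
  have hsum : ∑ b : {i // i ≠ j}, u b * (S b j * (S j j)⁻¹ * (S *ᵥ u) j) =
      (S j j)⁻¹ * (S *ᵥ u) j * ((S *ᵥ u) j - S j j * u j) := by
    rw [hvj, add_sub_cancel_left, Finset.mul_sum]
    exact Finset.sum_congr rfl fun b _ => by ring
  simp only [dotProduct, Fintype.sum_eq_add_sum_subtype_ne _ j, mul_sub, Finset.sum_sub_distrib,
    hsum]
  field_simp
  ring

lemma posDef_condCov (hS : S.PosDef) : (condCov S j).PosDef := by
  have hsymm : S.IsSymm := by simpa using hS.isHermitian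
  have hj : 0 < S j j := hS.diag_pos
  refine .of_dotProduct_mulVec_pos ?_ fun z hz => ?_
  · refine isHermitian_iff_isSymm.2 (IsSymm.ext fun a b => ?_)
    simp only [condCov, of_apply, hsymm.apply]
    ring
  · set u : ι → ℝ :=
      (Equiv.funSplitAt j ℝ).symm (-(S j j)⁻¹ * ∑ b : {i // i ≠ j}, S j b * z b, z)
    have hu : (fun i : {i // i ≠ j} => u i) = z := by
      ext b
      simp [u, b.2]
    have hSu : (S *ᵥ u) j = 0 := by
      have hzb (b : {i // i ≠ j}) : u b = z b := congrFun hu b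
      simp only [mulVec_apply_eq_add_sum_ne (j := j), hzb]
      simp [u, hj.ne']
    have hu0 : u ≠ 0 := fun h => hz (by rw [← hu, h]; rfl)
    have := dotProduct_mulVec_eq_add_condCov hsymm hj.ne' u
    rw [hSu, hu] at this
    simpa [this] using hS.dotProduct_mulVec_pos hu0

lemma det_eq_mul_det_condCov (hj : S j j ≠ 0) : S.det = S j j * (condCov S j).det := by
  let e := Equiv.sumCompl (· = j)
  have he : ((default : {i // i = j}) : ι) = j := rfl
  rw [← det_submatrix_equiv_self e S, ← fromBlocks_toBlocks (S.submatrix e e)]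
  have : Invertible (toBlocks₁₁ (S.submatrix e e)) :=
    invertibleOfIsUnitDet _ (by simp [det_unique, toBlocks₁₁, e, he, hj])
  have hschur : toBlocks₂₂ (S.submatrix e e) - toBlocks₂₁ (S.submatrix e e) *
      (toBlocks₁₁ (S.submatrix e e))⁻¹ * toBlocks₁₂ (S.submatrix e e) = condCov S j := by
    ext a b
    simp [toBlocks₁₁, toBlocks₁₂, toBlocks₂₁, toBlocks₂₂, inv_subsingleton, condCov, e, he,
      mul_apply]
  rw [det_fromBlocks₁₁, invOf_eq_nonsing_inv, hschur, det_unique]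
  rfl

lemma dotProduct_inv_mulVec_eq_add_condCov (hS : S.IsSymm) (hdet : IsUnit S.det)
    (hj : S j j ≠ 0) (v : ι → ℝ) :
    v ⬝ᵥ S⁻¹ *ᵥ v = v j ^ 2 / S j j +
      (fun i : {i // i ≠ j} => v i - S i j * (S j j)⁻¹ * v j) ⬝ᵥ
        (condCov S j)⁻¹ *ᵥ (fun i : {i // i ≠ j} => v i - S i j * (S j j)⁻¹ * v j) := by
  set w := fun i : {i // i ≠ j} => v i - S i j * (S j j)⁻¹ * v j
  set u := S⁻¹ *ᵥ v
  have hu : S *ᵥ u = v := by rw [mulVec_mulVec, mul_nonsing_inv _ hdet, one_mulVec]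
  have hΔ : IsUnit (condCov S j).det := by
    refine isUnit_iff_ne_zero.2 fun h => hdet.ne_zero ?_
    rw [det_eq_mul_det_condCov hj, h, mul_zero]
  have hw : condCov S j *ᵥ (fun i : {i // i ≠ j} => u i) = w := by rw [condCov_mulVec hj, hu]
  have hu' : (condCov S j)⁻¹ *ᵥ w = fun i : {i // i ≠ j} => u i := by
    rw [← hw, mulVec_mulVec, nonsing_inv_mul _ hΔ, one_mulVec]
  calc v ⬝ᵥ S⁻¹ *ᵥ v = u ⬝ᵥ S *ᵥ u := by rw [hu, dotProduct_comm]
    _ = v j ^ 2 / S j j + w ⬝ᵥ (condCov S j)⁻¹ *ᵥ w := by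
      rw [dotProduct_mulVec_eq_add_condCov hS hj, hu, hw, hu', dotProduct_comm]

end Schur

section Density
variable {ι : Type} [Fintype ι] [DecidableEq ι] {S : Matrix ι ι ℝ}

lemma continuous_mvnPdf (μ : ι → ℝ) : Continuous (mvnPdf μ S) := by
  unfold mvnPdf
  fun_prop

lemma mvnPdf_nonneg (μ : ι → ℝ) (hdet : 0 ≤ S.det) (x : ι → ℝ) :
    0 ≤ mvnPdf μ S x := by
  unfold mvnPdf
  positivity

lemma integrable_mvnPdf (μ : ι → ℝ) (hS : S.PosDef) :
    Integrable (mvnPdf μ S) := by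
  obtain ⟨c, hc, hcoer⟩ := exists_pos_mul_sum_sq_le_dotProduct_mulVec hS.inv
  set K := (2 * π) ^ (-(Fintype.card ι : ℝ) / 2) * S.det ^ (-(1 : ℝ) / 2)
  have hK : 0 ≤ K := by have := hS.det_pos; positivity
  have hdom : Integrable fun x : ι → ℝ => K * ∏ i, rexp (-(c / 2) * (x i - μ i) ^ 2) :=
    (Integrable.fintype_prod fun i =>
      (integrable_exp_neg_mul_sq (half_pos hc)).comp_sub_right (μ i)).const_mul K
  refine hdom.mono' (continuous_mvnPdf μ).aestronglyMeasurable (ae_of_all _ fun x => ?_)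
  have hexp : -(1 / 2) * ((x - μ) ⬝ᵥ S⁻¹ *ᵥ (x - μ)) ≤ ∑ i, -(c / 2) * (x i - μ i) ^ 2 := by
    have := hcoer (x - μ)
    simp only [Pi.sub_apply] at this
    rw [← Finset.mul_sum]
    linarith
  rw [Real.norm_of_nonneg (mvnPdf_nonneg μ hS.det_pos.le x), ← Real.exp_sum]
  exact mul_le_mul_of_nonneg_left (Real.exp_le_exp.2 hexp) hK

lemma mvnPdf_eq_gaussianPDFReal_mul (hS : S.PosDef) (μ : ι → ℝ) (j : ι) (x : ι → ℝ) :
    mvnPdf μ S x = gaussianPDFReal (μ j) (S j j).toNNReal (x j) *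
      mvnPdf (condMean S j μ (x j)) (condCov S j) (fun i => x i) := by
  have hj : 0 < S j j := hS.diag_pos
  have hΔ : 0 < (condCov S j).det := (posDef_condCov hS).det_pos
  have hsymm : S.IsSymm := by simpa using hS.isHermitian
  have hpi : (0 : ℝ) < 2 * π := by positivity
  have hw : (fun i : {i // i ≠ j} => x i) - condMean S j μ (x j) =
      fun i : {i // i ≠ j} => (x - μ) i - S i j * (S j j)⁻¹ * (x - μ) j := by
    ext i
    simp only [condMean, Pi.sub_apply]
    ring
  unfold mvnPdf gaussianPDFReal
  rw [hw, dotProduct_inv_mulVec_eq_add_condCov hsymm (isUnit_iff_ne_zero.2 hS.det_pos.ne') hj.ne',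
    det_eq_mul_det_condCov hj.ne', card_eq_card_ne_add_one j, Real.coe_toNNReal _ hj.le,
    Real.mul_rpow hj.le hΔ.le]
  set Q := (fun i : {i // i ≠ j} => (x - μ) i - S i j * (S j j)⁻¹ * (x - μ) j) ⬝ᵥ
    (condCov S j)⁻¹ *ᵥ fun i : {i // i ≠ j} => (x - μ) i - S i j * (S j j)⁻¹ * (x - μ) j
  set n := Fintype.card {i // i ≠ j}
  have hpow : (2 * π) ^ (-((n + 1 : ℕ) : ℝ) / 2) =
      (2 * π) ^ (-(1 : ℝ) / 2) * (2 * π) ^ (-(n : ℝ) / 2) := by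
    rw [← Real.rpow_add hpi]
    push_cast
    ring_nf
  have hsqrt : (√(2 * π * S j j))⁻¹ = (2 * π) ^ (-(1 : ℝ) / 2) * S j j ^ (-(1 : ℝ) / 2) := by
    rw [← Real.mul_rpow hpi.le hj.le, Real.sqrt_eq_rpow, ← Real.rpow_neg (by positivity)]
    ring_nf
  have hexp : rexp (-(1 / 2) * ((x - μ) j ^ 2 / S j j + Q)) =
      rexp (-(x j - μ j) ^ 2 / (2 * S j j)) * rexp (-(1 / 2) * Q) := by
    rw [← Real.exp_add, Pi.sub_apply]
    ring_nf
  rw [hpow, hsqrt, hexp]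
  ring

end Density

section SetIntegralIic
variable {ι : Type*} [Fintype ι] {E : Type*} [NormedAddCommGroup E] [NormedSpace ℝ E]

lemma eventually_le_iff_le_of_forall_ne {x u₀ : ι → ℝ} (h : ∀ i, x i ≠ u₀ i) :
    ∀ᶠ u in 𝓝 u₀, (x ≤ u ↔ x ≤ u₀) := by
  have hi (i : ι) : ∀ᶠ u in 𝓝 u₀, (x i ≤ u i ↔ x i ≤ u₀ i) := by
    have hcont := (continuous_apply i).tendsto u₀
    rcases (h i).lt_or_gt with hlt | hgt
    · exact (hcont.eventually (lt_mem_nhds hlt)).mono fun u hu => iff_of_true hu.le hlt.le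
    · exact (hcont.eventually (gt_mem_nhds hgt)).mono fun u hu =>
        iff_of_false (not_le.2 hu) (not_le.2 hgt)
  filter_upwards [eventually_all.2 hi] with u hu
  exact forall_congr' hu

lemma continuous_setIntegral_Iic {g : (ι → ℝ) → E} (hg : Integrable g) :
    Continuous fun u => ∫ x in Iic u, g x := by
  refine continuous_iff_continuousAt.2 fun u₀ => ?_
  simp only [ContinuousAt, ← integral_indicator measurableSet_Iic]
  refine tendsto_integral_filter_of_dominated_convergence (fun x => ‖g x‖)
    (.of_forall fun u => hg.aestronglyMeasurable.indicator measurableSet_Iic)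
    (.of_forall fun u => .of_forall fun x => norm_indicator_le_norm_self g x) hg.norm ?_
  have hae : ∀ᵐ x : ι → ℝ, ∀ i, x i ≠ u₀ i :=
    ae_all_iff.2 fun i => by rw [volume_pi]; exact Measure.ae_eval_ne _ i _
  filter_upwards [hae] with x hx
  refine tendsto_const_nhds.congr' ?_
  filter_upwards [eventually_le_iff_le_of_forall_ne hx] with u hu
  by_cases hxu : x ≤ u₀
  · rw [indicator_of_mem hxu, indicator_of_mem (hu.2 hxu)]
  · rw [indicator_of_notMem hxu, indicator_of_notMem (mt hu.1 hxu)]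

lemma setIntegral_Iic_comp_sub (g : (ι → ℝ) → E) (c u : ι → ℝ) :
    ∫ x in Iic u, g (x - c) = ∫ x in Iic (u - c), g x := by
  have h := (measurePreserving_sub_right volume c).setIntegral_preimage_emb
    (MeasurableEquiv.subRight c).measurableEmbedding g (Iic (u - c))
  rwa [preimage_sub_const_Iic, sub_add_cancel] at h

lemma measurePreserving_funSplitAt [DecidableEq ι] (j : ι) :
    MeasurePreserving (Equiv.funSplitAt j ℝ) volume volume := by
  -- The two library lemmas use different `Fintype {i // i = j}` instances; `convert` restates
  -- both with the default one so that they compose.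
  have h₁ : MeasurePreserving (MeasurableEquiv.funUnique {i // i = j} ℝ) volume volume := by
    convert volume_preserving_funUnique {i // i = j} ℝ
  have h₂ : MeasurePreserving (MeasurableEquiv.piEquivPiSubtypeProd (fun _ : ι => ℝ) (· = j))
      volume volume := by
    convert volume_preserving_piEquivPiSubtypeProd (fun _ : ι => ℝ) (· = j) <;> rfl
  rw [Measure.volume_eq_prod] at h₂ ⊢
  exact (h₁.prod (.id volume)).comp h₂

lemma setIntegral_Iic_update [DecidableEq ι] {f : (ι → ℝ) → E} (hf : Integrable f) (j : ι)
    (y : ι → ℝ) (t : ℝ) :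
    ∫ x in Iic (Function.update y j t), f x =
      ∫ s in Iic t, ∫ z in Iic (fun i : {i // i ≠ j} => y i),
        f ((Equiv.funSplitAt j ℝ).symm (s, z)) := by
  let e := (Homeomorph.funSplitAt ℝ j).toMeasurableEquiv
  have he : MeasurePreserving e.symm volume volume := (measurePreserving_funSplitAt j).symm e
  have hpre : e.symm ⁻¹' Iic (Function.update y j t) =
      Iic t ×ˢ Iic (fun i : {i // i ≠ j} => y i) := by
    ext ⟨s, z⟩
    simp only [mem_preimage, mem_prod, mem_Iic]
    rw [le_update_iff]
    simp +contextual [e, Pi.le_def]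
  rw [← he.setIntegral_preimage_emb e.symm.measurableEmbedding, hpre, Measure.volume_eq_prod,
    setIntegral_prod]
  · rfl
  · exact ((he.integrable_comp_emb e.symm.measurableEmbedding).2 hf).integrableOn

end SetIntegralIic

lemma hasDerivAt_setIntegral_Iic {E : Type*} [NormedAddCommGroup E] [NormedSpace ℝ E]
    [CompleteSpace E] {f : ℝ → E} (hf : Integrable f) {a : ℝ} (ha : ContinuousAt f a) :
    HasDerivAt (fun u => ∫ x in Iic u, f x) (f a) a := by
  have h : (fun u => ∫ x in Iic u, f x) = fun u => (∫ x in Iic a, f x) + ∫ x in a..u, f x := by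
    funext u
    rw [← intervalIntegral.integral_Iic_sub_Iic hf.integrableOn hf.integrableOn, add_sub_cancel]
  rw [h]
  exact (intervalIntegral.integral_hasDerivAt_right hf.intervalIntegrable
    hf.aestronglyMeasurable.stronglyMeasurableAtFilter ha).const_add _

section Cdf
variable {ι : Type} [Fintype ι] [DecidableEq ι] {S : Matrix ι ι ℝ}

lemma mvnCdf_eq_setIntegral_Iic_sub (μ y : ι → ℝ) :
    mvnCdf μ S y = ∫ x in Iic (y - μ), mvnPdf 0 S x := by
  rw [mvnCdf, ← setIntegral_Iic_comp_sub]
  simp only [mvnPdf, sub_zero]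

lemma continuous_mvnCdf_mean (hS : S.PosDef) (y : ι → ℝ) :
    Continuous fun μ => mvnCdf μ S y := by
  simp only [mvnCdf_eq_setIntegral_Iic_sub]
  exact (continuous_setIntegral_Iic (integrable_mvnPdf 0 hS)).comp
    (continuous_const.sub continuous_id)

lemma norm_mvnCdf_le (hS : S.PosDef) (μ y : ι → ℝ) :
    ‖mvnCdf μ S y‖ ≤ ∫ x, mvnPdf 0 S x := by
  have hpdf := mvnPdf_nonneg 0 hS.det_pos.le
  rw [mvnCdf_eq_setIntegral_Iic_sub,
    Real.norm_of_nonneg (setIntegral_nonneg measurableSet_Iic fun x _ => hpdf x)]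
  exact setIntegral_le_integral (integrable_mvnPdf 0 hS) (.of_forall hpdf)

lemma mvnCdf_update_eq_setIntegral (hS : S.PosDef) (μ : ι → ℝ) (j : ι) (y : ι → ℝ) (t : ℝ) :
    mvnCdf μ S (Function.update y j t) =
      ∫ s in Iic t, gaussianPDFReal (μ j) (S j j).toNNReal s *
        mvnCdf (condMean S j μ s) (condCov S j) (fun i => y i) := by
  rw [mvnCdf, setIntegral_Iic_update (integrable_mvnPdf μ hS)]
  refine setIntegral_congr_fun measurableSet_Iic fun s _ => ?_
  rw [mvnCdf, ← integral_const_mul]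
  refine integral_congr_ae (.of_forall fun z => ?_)
  have h := (Equiv.funSplitAt j ℝ).apply_symm_apply (s, z)
  simp only [Equiv.funSplitAt_apply, Prod.mk.injEq] at h
  dsimp only
  rw [mvnPdf_eq_gaussianPDFReal_mul hS, h.1, h.2]

theorem hasDerivAt_mvnCdf_update (hS : S.PosDef) (μ : ι → ℝ) (j : ι) (y : ι → ℝ) :
    HasDerivAt (fun t => mvnCdf μ S (Function.update y j t))
      (gaussianPDFReal (μ j) (S j j).toNNReal (y j) *
        mvnCdf (condMean S j μ (y j)) (condCov S j) (fun i => y i)) (y j) := by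
  set G := fun s => mvnCdf (condMean S j μ s) (condCov S j) (fun i : {i // i ≠ j} => y i)
  have hG : Continuous G :=
    (continuous_mvnCdf_mean (posDef_condCov hS) _).comp (by unfold condMean; fun_prop)
  have hint : Integrable fun s => gaussianPDFReal (μ j) (S j j).toNNReal s * G s :=
    (integrable_gaussianPDFReal _ _).mul_bdd hG.aestronglyMeasurable
      (.of_forall fun s => norm_mvnCdf_le (posDef_condCov hS) _ _)
  have hcont : Continuous (gaussianPDFReal (μ j) (S j j).toNNReal) := by
    unfold gaussianPDFReal
    fun_prop
  simp only [mvnCdf_update_eq_setIntegral hS]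
  exact hasDerivAt_setIntegral_Iic hint (hcont.mul hG).continuousAt

end Cdf

theorem mvnCdf_partialDeriv_general {k : ℕ}
    (S : Matrix (Fin k) (Fin k) ℝ) (hS : S.PosDef)
    (μ : Fin k → ℝ) (j : Fin k) (y : Fin k → ℝ) :
    HasDerivAt (fun t => mvnCdf μ S (Function.update y j t))
      (((Real.sqrt (2 * Real.pi * S j j))⁻¹ *
          Real.exp (-((y j - μ j) ^ 2) / (2 * S j j))) *
        mvnCdf
          (fun i : {i : Fin k // i ≠ j} => μ i.1 + S i.1 j * (S j j)⁻¹ * (y j - μ j))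
          (Matrix.of fun a b : {i : Fin k // i ≠ j} =>
            S a.1 b.1 - S a.1 j * (S j j)⁻¹ * S j b.1)
          (fun i : {i : Fin k // i ≠ j} => y i.1))
      (y j) := by
  have h := hasDerivAt_mvnCdf_update hS μ j y
  rwa [gaussianPDFReal, Real.coe_toNNReal _ hS.diag_pos.le] at h

/-- The partial derivative of the multivariate normal CDF `Φ_{μ,Σ}` with respect to the
`j`-th coordinate equals the univariate `N(μⱼ, Σⱼⱼ)` density at `yⱼ` times the CDF of the
conditional normal distribution of the remaining coordinates given the `j`-th one,
evaluated at `y₋ⱼ`. -/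
theorem mvnCdf_partialDeriv {k : ℕ} (hk : 2 ≤ k)
    (S : Matrix (Fin k) (Fin k) ℝ) (hS : S.PosDef)
    (μ : Fin k → ℝ) (j : Fin k) (y : Fin k → ℝ) :
    HasDerivAt (fun t => mvnCdf μ S (Function.update y j t))
      (((Real.sqrt (2 * Real.pi * S j j))⁻¹ *
          Real.exp (-((y j - μ j) ^ 2) / (2 * S j j))) *
        mvnCdf
          (fun i : {i : Fin k // i ≠ j} => μ i.1 + S i.1 j * (S j j)⁻¹ * (y j - μ j))
          (Matrix.of fun a b : {i : Fin k // i ≠ j} =>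
            S a.1 b.1 - S a.1 j * (S j j)⁻¹ * S j b.1)
          (fun i : {i : Fin k // i ≠ j} => y i.1))
      (y j) :=
  mvnCdf_partialDeriv_general S hS μ j y
end
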